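/- Let M be a DFA over an alphabet α whose state type σ is a Fintype. If q is a commit state of M (there exists a word w with M.eval w ∈ M.accept and M.evalFrom q w ∉ M.accept), then there exists such a distinguishing word w of length strictly less than (Fintype.card σ) * (Fintype.card σ). -/
import Mathlib

private lemma dfa_short_accept {α σ : Type*} [Fintype σ] (N : DFA α σ) (s : σ) :
    ∀ n (w : List α), w.length ≤ n → N.evalFrom s w ∈ N.accept →
    ∃ w' : List α, N.evalFrom s w' ∈ N.accept ∧ w'.length < Fintype.card σ := by
  have hpos : 0 < Fintype.card σ := @Fintype.card_pos σ _ ⟨s⟩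
  intro n
  induction n with
  | zero =>
    intro w hw hacc
    exact ⟨w, hacc, by omega⟩
  | succ n ih =>
    intro w hw hacc
    by_cases hlt : w.length < Fintype.card σ
    · exact ⟨w, hacc, hlt⟩
    · push_neg at hlt
      obtain ⟨p, a, b, c, hx, hlen, hb, ha, hbloop, hc⟩ :=
        N.evalFrom_split (s := s) (t := N.evalFrom s w) hlt rfl
      have hacc' : N.evalFrom s (a ++ c) ∈ N.accept := by
        rw [DFA.evalFrom_of_append, ha, hc]; exact hacc
      have hblen : 0 < b.length := List.length_pos_iff.mpr hb
      have hwlen : w.length = a.length + b.length + c.length := by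
        subst hx; simp; omega
      have : (a ++ c).length ≤ n := by
        simp only [List.length_append]; omega
      exact ih (a ++ c) this hacc'

private def prodDFA {α σ : Type*} (M : DFA α σ) (q : σ) : DFA α (σ × σ) where
  step p a := (M.step p.1 a, M.step p.2 a)
  start := (M.start, q)
  accept := {p | p.1 ∈ M.accept ∧ p.2 ∉ M.accept}

private lemma prodDFA_evalFrom {α σ : Type*} (M : DFA α σ) (q : σ) :
    ∀ (w : List α) (p : σ × σ),
      (prodDFA M q).evalFrom p w = (M.evalFrom p.1 w, M.evalFrom p.2 w) := by
  intro w
  induction w with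
  | nil => intro p; rfl
  | cons a w ih =>
    intro p
    simp only [DFA.evalFrom, List.foldl_cons] at *
    exact ih _

theorem commit_witness_short {α σ : Type*} [Fintype σ] (M : DFA α σ) (q : σ)
    (h : ∃ w : List α, M.eval w ∈ M.accept ∧ M.evalFrom q w ∉ M.accept) :
    ∃ w : List α, (M.eval w ∈ M.accept ∧ M.evalFrom q w ∉ M.accept) ∧
      w.length < Fintype.card σ * Fintype.card σ := by
  obtain ⟨w, hw1, hw2⟩ := h
  have hacc : (prodDFA M q).evalFrom (M.start, q) w ∈ (prodDFA M q).accept := by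
    rw [prodDFA_evalFrom]; exact ⟨hw1, hw2⟩
  obtain ⟨w', hw', hlen⟩ :=
    dfa_short_accept (prodDFA M q) (M.start, q) w.length w le_rfl hacc
  rw [prodDFA_evalFrom] at hw'
  refine ⟨w', ⟨hw'.1, hw'.2⟩, ?_⟩
  simpa [Fintype.card_prod] using hlen
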